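/- Let F be a field of characteristic zero and J an infinite set. The trace form κ on sl_J(F), defined by κ(f, g) = tr(f ∘ g), is invariant under all derivations of sl_J(F): for every derivation D of sl_J(F) and all f, g ∈ sl_J(F), one has κ(D f, g) + κ(f, D g) = 0. -/

import Mathlib

set_option maxHeartbeats 1000000
set_option synthInstance.maxHeartbeats 1000000

attribute [local instance 100] LieRing.ofAssociativeRing

/-- An `F`-linear endomorphism `f` of `ι →₀ F` is *finitary* if the set of pairs `(i, j)`
with `(f eⱼ) i ≠ 0` (where `eⱼ = single j 1` are the standard basis vectors) is finite. -/
def Finitary (F : Type*) [Field F] {ι : Type*} (f : Module.End F (ι →₀ F)) : Prop :=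
  {p : ι × ι | f (Finsupp.single p.2 1) p.1 ≠ 0}.Finite

/-- The trace of a (finitary) endomorphism of `ι →₀ F`. -/
noncomputable def trF (F : Type*) [Field F] {ι : Type*} (f : Module.End F (ι →₀ F)) : F :=
  ∑ᶠ j, f (Finsupp.single j 1) j

section SL

variable {F : Type*} [Field F] {ι : Type*}

lemma end_apply_eq_sum (f : Module.End F (ι →₀ F)) (v : ι →₀ F) :
    f v = ∑ i ∈ v.support, v i • f (Finsupp.single i 1) := by
  conv_lhs => rw [← Finsupp.sum_single v, Finsupp.sum, map_sum]
  exact Finset.sum_congr rfl fun i _ => by rw [← Finsupp.smul_single_one, map_smul]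

lemma column_eq_zero {f : Module.End F (ι →₀ F)} {j : ι}
    (h : ∀ i, f (Finsupp.single j 1) i = 0) : f (Finsupp.single j 1) = 0 := by
  ext i; simpa using h i

namespace Finitary

variable {f g : Module.End F (ι →₀ F)}

lemma add (hf : Finitary F f) (hg : Finitary F g) : Finitary F (f + g) := by
  refine (hf.union hg).subset fun p hp => ?_
  by_contra h
  simp only [Set.mem_union, Set.mem_setOf_eq, not_or, not_not] at h
  exact hp (by simp [LinearMap.add_apply, Finsupp.add_apply, h.1, h.2])

lemma zero : Finitary F (0 : Module.End F (ι →₀ F)) := by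
  have h : {p : ι × ι | (0 : Module.End F (ι →₀ F)) (Finsupp.single p.2 1) p.1 ≠ 0} = ∅ := by
    ext p; simp
  unfold Finitary
  rw [h]
  exact Set.finite_empty

lemma smul (c : F) (hf : Finitary F f) : Finitary F (c • f) := by
  refine hf.subset fun p hp => ?_
  simp only [Set.mem_setOf_eq, LinearMap.smul_apply, Finsupp.smul_apply] at hp ⊢
  intro h
  exact hp (by simp [h])

lemma neg (hf : Finitary F f) : Finitary F (-f) := by
  refine hf.subset fun p hp => ?_
  simp only [Set.mem_setOf_eq, LinearMap.neg_apply, Finsupp.neg_apply, neg_ne_zero] at hp ⊢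
  exact hp

lemma sub (hf : Finitary F f) (hg : Finitary F g) : Finitary F (f - g) := by
  have h : f - g = f + -g := sub_eq_add_neg f g
  rw [h]
  exact hf.add hg.neg

lemma mul (hf : Finitary F f) (hg : Finitary F g) : Finitary F (f * g) := by
  refine ((hf.image Prod.fst).prod (hg.image Prod.snd)).subset ?_
  rintro ⟨k, l⟩ hkl
  simp only [Set.mem_setOf_eq, Module.End.mul_apply] at hkl
  constructor
  · -- k ∈ Prod.fst '' S_f
    by_contra hk
    apply hkl
    rw [end_apply_eq_sum f (g (Finsupp.single l 1)), Finset.sum_apply']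
    refine Finset.sum_eq_zero fun i _ => ?_
    have : f (Finsupp.single i 1) k = 0 := by
      by_contra h
      exact hk ⟨(k, i), h, rfl⟩
    simp [this]
  · -- l ∈ Prod.snd '' S_g
    by_contra hl
    apply hkl
    have : g (Finsupp.single l 1) = 0 := by
      refine column_eq_zero fun i => ?_
      by_contra h
      exact hl ⟨(i, l), h, rfl⟩
    rw [this, map_zero]
    simp

end Finitary

lemma trace_support_finite {f : Module.End F (ι →₀ F)} (hf : Finitary F f) :
    (Function.support fun j => f (Finsupp.single j 1) j).Finite :=
  (hf.image Prod.fst).subset fun j hj => ⟨(j, j), hj, rfl⟩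

lemma trF_add {f g : Module.End F (ι →₀ F)} (hf : Finitary F f) (hg : Finitary F g) :
    trF F (f + g) = trF F f + trF F g := by
  unfold trF
  rw [← finsum_add_distrib (trace_support_finite hf) (trace_support_finite hg)]
  simp [LinearMap.add_apply]

lemma trF_zero : trF F (0 : Module.End F (ι →₀ F)) = 0 := by
  unfold trF; simp

lemma trF_neg (f : Module.End F (ι →₀ F)) : trF F (-f) = -trF F f := by
  unfold trF
  rw [← finsum_neg_distrib]
  simp

lemma trF_sub {f g : Module.End F (ι →₀ F)} (hf : Finitary F f) (hg : Finitary F g) :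
    trF F (f - g) = trF F f - trF F g := by
  have h2 : f - g = f + -g := sub_eq_add_neg f g
  have h := trF_add hf hg.neg
  rw [trF_neg] at h
  rw [h2, h, sub_eq_add_neg]

lemma trF_smul (c : F) (f : Module.End F (ι →₀ F)) : trF F (c • f) = c * trF F f := by
  unfold trF
  rcases (Function.support fun j => f (Finsupp.single j 1) j).finite_or_infinite with h | h
  · rw [mul_finsum _ _]; simp
  · by_cases hc : c = 0
    · simp [hc]
    · have h2 : (Function.support fun j => (c • f) (Finsupp.single j 1) j).Infinite := by
        refine h.mono fun j hj => ?_
        simp only [Function.mem_support, LinearMap.smul_apply, Finsupp.smul_apply,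
          smul_eq_mul] at hj ⊢
        exact mul_ne_zero hc hj
      rw [finsum_of_infinite_support h, finsum_of_infinite_support h2, mul_zero]

end SL

section SL2

variable {F : Type*} [Field F] {ι : Type*}

lemma entry_formula {g : Module.End F (ι →₀ F)}
    (f : Module.End F (ι →₀ F)) (T : Finset ι)
    (hT : ∀ p : ι × ι, g (Finsupp.single p.2 1) p.1 ≠ 0 → p.1 ∈ T)
    (j k : ι) :
    (f * g) (Finsupp.single j 1) k = ∑ i ∈ T, g (Finsupp.single j 1) i * f (Finsupp.single i 1) k := by
  classical
  rw [Module.End.mul_apply, end_apply_eq_sum f (g (Finsupp.single j 1)), Finset.sum_apply']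
  rw [Finset.sum_subset (fun i hi => hT (i, j) (Finsupp.mem_support_iff.mp hi))]
  · exact Finset.sum_congr rfl fun i _ => by simp [smul_eq_mul]
  · intro i _ hi
    rw [Finsupp.notMem_support_iff.mp hi]
    simp

lemma trF_mul_comm {f g : Module.End F (ι →₀ F)} (hf : Finitary F f) (hg : Finitary F g) :
    trF F (f * g) = trF F (g * f) := by
  classical
  obtain ⟨T, hfT, hgT⟩ :
      ∃ T : Finset ι,
        (∀ p : ι × ι, f (Finsupp.single p.2 1) p.1 ≠ 0 → p.1 ∈ T ∧ p.2 ∈ T) ∧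
        (∀ p : ι × ι, g (Finsupp.single p.2 1) p.1 ≠ 0 → p.1 ∈ T ∧ p.2 ∈ T) := by
    refine ⟨(hf.toFinset ∪ hg.toFinset).biUnion fun p => {p.1, p.2}, fun p hp => ?_, fun p hp => ?_⟩
    · have hmem : p ∈ hf.toFinset ∪ hg.toFinset :=
        Finset.mem_union_left _ (hf.mem_toFinset.mpr hp)
      exact ⟨Finset.mem_biUnion.mpr ⟨p, hmem, by simp⟩, Finset.mem_biUnion.mpr ⟨p, hmem, by simp⟩⟩
    · have hmem : p ∈ hf.toFinset ∪ hg.toFinset :=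
        Finset.mem_union_right _ (hg.mem_toFinset.mpr hp)
      exact ⟨Finset.mem_biUnion.mpr ⟨p, hmem, by simp⟩, Finset.mem_biUnion.mpr ⟨p, hmem, by simp⟩⟩
  -- columns outside T vanish
  have hgcol : ∀ j, j ∉ T → g (Finsupp.single j 1) = 0 := fun j hj =>
    column_eq_zero fun i => by
      by_contra h
      exact hj ((hgT (i, j) h).2)
  have hfcol : ∀ j, j ∉ T → f (Finsupp.single j 1) = 0 := fun j hj =>
    column_eq_zero fun i => by
      by_contra h
      exact hj ((hfT (i, j) h).2)
  have hsupfg : (Function.support fun j => (f * g) (Finsupp.single j 1) j) ⊆ (T : Set ι) := by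
    intro j hj
    by_contra hjT
    apply hj
    simp [Module.End.mul_apply, hgcol j hjT]
  have hsupgf : (Function.support fun j => (g * f) (Finsupp.single j 1) j) ⊆ (T : Set ι) := by
    intro j hj
    by_contra hjT
    apply hj
    simp [Module.End.mul_apply, hfcol j hjT]
  rw [trF, trF, finsum_eq_finset_sum_of_support_subset _ hsupfg,
    finsum_eq_finset_sum_of_support_subset _ hsupgf]
  calc ∑ j ∈ T, (f * g) (Finsupp.single j 1) j
      = ∑ j ∈ T, ∑ i ∈ T, g (Finsupp.single j 1) i * f (Finsupp.single i 1) j :=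
        Finset.sum_congr rfl fun j _ => entry_formula f T (fun p hp => (hgT p hp).1) j j
    _ = ∑ i ∈ T, ∑ j ∈ T, g (Finsupp.single j 1) i * f (Finsupp.single i 1) j := Finset.sum_comm
    _ = ∑ i ∈ T, ∑ j ∈ T, f (Finsupp.single i 1) j * g (Finsupp.single j 1) i :=
        Finset.sum_congr rfl fun i _ => Finset.sum_congr rfl fun j _ => mul_comm _ _
    _ = ∑ i ∈ T, (g * f) (Finsupp.single i 1) i :=
        Finset.sum_congr rfl fun i _ => (entry_formula g T (fun p hp => (hfT p hp).1) i i).symm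

/-- The Lie algebra `sl_J(F)` of finitary trace-zero endomorphisms of `J →₀ F`. -/
def slJ (F : Type*) [Field F] (J : Type*) : LieSubalgebra F (Module.End F (J →₀ F)) where
  carrier := {f | Finitary F f ∧ trF F f = 0}
  add_mem' := fun {a b} ha hb => ⟨ha.1.add hb.1, by rw [trF_add ha.1 hb.1, ha.2, hb.2, add_zero]⟩
  zero_mem' := ⟨Finitary.zero, trF_zero⟩
  smul_mem' := fun c x hx => ⟨hx.1.smul c, by rw [trF_smul, hx.2, mul_zero]⟩
  lie_mem' := fun {x y} hx hy => by
    have hxy : ⁅x, y⁆ = x * y - y * x := Ring.lie_def x y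
    refine ⟨?_, ?_⟩
    · rw [Set.mem_setOf_eq] at *
      rw [hxy]
      exact (hx.1.mul hy.1).sub (hy.1.mul hx.1)
    · rw [hxy, trF_sub (hx.1.mul hy.1) (hy.1.mul hx.1), trF_mul_comm hx.1 hy.1, sub_self]

end SL2

/-- The trace form `κ (f, g) = tr (f ∘ g)` on `sl_J(F)`. -/
noncomputable def kappa (F : Type*) [Field F] (J : Type*) (f g : slJ F J) : F :=
  trF F ((f : Module.End F (J →₀ F)) * (g : Module.End F (J →₀ F)))

/-!
Write `γ(x, y) = κ(D x, y) + κ(x, D y)`. Since `κ` is invariant and `D` is a derivation, `γ` is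
again invariant, so `γ(x, y) = 0` whenever `x` and `y` are eigenvectors of one `ad h` whose
eigenvalues have nonzero sum (here `1` or `2`, whence characteristic zero). As `J` is infinite,
a spare index `v` is always available, and `h = E_ww - E_vv` separates every pair of elementary
matrices except the transposed pairs `(E_ab, E_ba)`. For those,
`γ(E_ab, E_ba) = φ(a, b) + φ(b, a)` with `φ(i, j) = κ(D E_ij, E_ji)`, and `E_ij = [E_ik, E_kj]`
makes `φ` additive along paths, `φ(i, j) = φ(i, k) + φ(k, j)`; going around a triangle `a, b, i`
gives `φ(a, b) + φ(b, a) = 0`. Then `γ(E_ab, ·)` vanishes, hence so does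
`γ(E_aa - E_bb, ·) = γ(E_ab, [E_ba, ·])`, and these elements span `sl_J(F)`.
-/

namespace LinearMap.BilinForm

variable {R L : Type*} [CommRing R] [LieRing L] [LieAlgebra R L] {B : LinearMap.BilinForm R L}

theorem lieInvariant.apply_lie_apply (hB : B.lieInvariant L) (x y z : L) :
    B ⁅x, y⁆ z = B x ⁅y, z⁆ := by
  rw [← lie_skew, map_neg, LinearMap.neg_apply, hB, neg_neg]

theorem lieInvariant.apply_eq_zero_of_lie_eq_smul [NoZeroDivisors R] (hB : B.lieInvariant L)
    {z x y : L} {l m : R} (hx : ⁅z, x⁆ = l • x) (hy : ⁅z, y⁆ = m • y) (hlm : l + m ≠ 0) :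
    B x y = 0 := by
  have h := hB z x y
  rw [hx, hy, map_smul, LinearMap.smul_apply, map_smul, smul_eq_mul, smul_eq_mul] at h
  exact (mul_eq_zero.mp (by linear_combination h : (l + m) * B x y = 0)).resolve_left hlm

def derivForm (B : LinearMap.BilinForm R L) (D : LieDerivation R L L) : LinearMap.BilinForm R L :=
  B ∘ₗ (D : L →ₗ[R] L) + B.compl₂ (D : L →ₗ[R] L)

@[simp]
theorem derivForm_apply (D : LieDerivation R L L) (x y : L) :
    B.derivForm D x y = B (D x) y + B x (D y) :=
  rfl

theorem lieInvariant.derivForm (hB : B.lieInvariant L) (D : LieDerivation R L L) :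
    (B.derivForm D).lieInvariant L := by
  intro z x y
  simp only [derivForm_apply, D.apply_lie_eq_add, map_add, LinearMap.add_apply]
  rw [hB z (D x), hB (D z) x, hB z x]
  ring

end LinearMap.BilinForm

section ElemEnd

variable {F : Type*} [Field F] {J : Type*}

noncomputable def elemEnd (F : Type*) [Field F] {J : Type*} (i j : J) : Module.End F (J →₀ F) :=
  Finsupp.lsingle i ∘ₗ Finsupp.lapply j

@[simp]
theorem elemEnd_apply (i j : J) (v : J →₀ F) : elemEnd F i j v = Finsupp.single i (v j) :=
  rfl

theorem elemEnd_mul [DecidableEq J] (i j k l : J) :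
    elemEnd F i j * elemEnd F k l = if j = k then elemEnd F i l else 0 := by
  ext m n
  by_cases h : j = k <;> simp [h, Finsupp.single_apply, eq_comm]

theorem finitary_elemEnd (i j : J) : Finitary F (elemEnd F i j) := by
  classical
  refine (Set.finite_singleton (i, j)).subset fun p hp => ?_
  simp only [Set.mem_ofPred_eq, elemEnd_apply, Finsupp.single_apply] at hp
  split_ifs at hp <;> simp_all [Prod.ext_iff]

theorem trF_elemEnd [DecidableEq J] (i j : J) :
    trF F (elemEnd F i j) = if i = j then 1 else 0 := by
  rw [trF, finsum_eq_single _ j fun k hk => by simp [hk]]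
  simp [Finsupp.single_apply]

theorem Finitary.eq_sum_elemEnd {f : Module.End F (J →₀ F)} (hf : Finitary F f) :
    f = ∑ p ∈ hf.toFinset, f (Finsupp.single p.2 1) p.1 • elemEnd F p.1 p.2 := by
  classical
  ext j i
  simp only [LinearMap.coe_comp, Function.comp_apply, Finsupp.lsingle_apply,
    LinearMap.sum_apply, LinearMap.smul_apply, elemEnd_apply,
    Finsupp.finsetSum_apply, Finsupp.smul_apply, smul_eq_mul]
  rw [Finset.sum_eq_single (i, j)]
  · simp
  · rintro ⟨a, b⟩ - hab
    simp only [Finsupp.single_apply, mul_ite, mul_one, mul_zero]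
    split_ifs <;> simp_all
  · intro h
    simp_all [hf.mem_toFinset]

end ElemEnd

namespace slJ

variable {F : Type*} [Field F] {J : Type*}

theorem coe_lie (x y : slJ F J) :
    ((⁅x, y⁆ : slJ F J) : Module.End F (J →₀ F)) = x * y - y * x :=
  rfl

noncomputable def traceForm (F : Type*) [Field F] (J : Type*) :
    LinearMap.BilinForm F (slJ F J) :=
  LinearMap.mk₂ F (kappa F J)
    (fun x y z => by
      simp only [kappa, AddMemClass.coe_add, add_mul]
      exact trF_add (x.2.1.mul z.2.1) (y.2.1.mul z.2.1))
    (fun c x z => by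
      simp only [kappa, SetLike.val_smul, smul_mul_assoc]
      exact trF_smul c _)
    (fun x y z => by
      simp only [kappa, AddMemClass.coe_add, mul_add]
      exact trF_add (x.2.1.mul y.2.1) (x.2.1.mul z.2.1))
    (fun c x z => by
      simp only [kappa, SetLike.val_smul, mul_smul_comm]
      exact trF_smul c _)

theorem traceForm_apply (x y : slJ F J) : traceForm F J x y = kappa F J x y :=
  rfl

theorem traceForm_comm (x y : slJ F J) : traceForm F J x y = traceForm F J y x :=
  trF_mul_comm x.2.1 y.2.1

theorem traceForm_lieInvariant : (traceForm F J).lieInvariant (slJ F J) := by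
  intro x y z
  have hx := x.2.1
  have hy := y.2.1
  have hz := z.2.1
  have hl : ((x * y - y * x) * z : Module.End F (J →₀ F)) = x * (y * z) - y * (x * z) := by
    ext; simp
  have hr : (y * (x * z - z * x) : Module.End F (J →₀ F)) = y * (x * z) - y * z * x := by
    ext; simp
  rw [traceForm_apply, traceForm_apply, kappa, kappa, coe_lie, coe_lie, hl, hr,
    trF_sub (hx.mul (hy.mul hz)) (hy.mul (hx.mul hz)),
    trF_sub (hy.mul (hx.mul hz)) ((hy.mul hz).mul hx), trF_mul_comm hx (hy.mul hz)]
  ring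

noncomputable def E (F : Type*) [Field F] {J : Type*} (i j : J) (h : i ≠ j) : slJ F J :=
  ⟨elemEnd F i j, finitary_elemEnd i j, by classical rw [trF_elemEnd, if_neg h]⟩

noncomputable def H (F : Type*) [Field F] {J : Type*} (i j : J) : slJ F J :=
  ⟨elemEnd F i i - elemEnd F j j, (finitary_elemEnd i i).sub (finitary_elemEnd j j), by
    classical
    rw [trF_sub (finitary_elemEnd i i) (finitary_elemEnd j j), trF_elemEnd, trF_elemEnd,
      if_pos rfl, if_pos rfl, sub_self]⟩

@[simp]
theorem coe_E (i j : J) (h : i ≠ j) : (E F i j h : Module.End F (J →₀ F)) = elemEnd F i j :=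
  rfl

@[simp]
theorem coe_H (i j : J) : (H F i j : Module.End F (J →₀ F)) = elemEnd F i i - elemEnd F j j :=
  rfl

theorem H_self (i : J) : H F i i = 0 :=
  Subtype.ext (sub_self (elemEnd F i i))

theorem lie_E_E {i j k : J} (hij : i ≠ j) (hjk : j ≠ k) (hik : i ≠ k) :
    ⁅E F i j hij, E F j k hjk⁆ = E F i k hik := by
  classical
  apply Subtype.ext
  rw [coe_lie, coe_E, coe_E, coe_E, elemEnd_mul, elemEnd_mul, if_pos rfl, if_neg hik.symm]
  exact sub_zero (elemEnd F i k)

theorem lie_E_E_swap {i j : J} (hij : i ≠ j) : ⁅E F i j hij, E F j i hij.symm⁆ = H F i j := by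
  classical
  apply Subtype.ext
  rw [coe_lie, coe_E, coe_E, coe_H, elemEnd_mul, elemEnd_mul, if_pos rfl, if_pos rfl]

theorem lie_H_E_of_ne [DecidableEq J] (w : J) {v a b : J} (hab : a ≠ b) (hva : v ≠ a)
    (hvb : v ≠ b) :
    ⁅H F w v, E F a b hab⁆ =
      ((if w = a then 1 else 0) - (if w = b then 1 else 0) : F) • E F a b hab := by
  apply Subtype.ext
  rw [coe_lie, SetLike.val_smul, coe_H, coe_E]
  simp only [Module.End.mul_eq_comp, LinearMap.sub_comp, LinearMap.comp_sub]
  simp only [← Module.End.mul_eq_comp, elemEnd_mul, if_neg hva, if_neg hvb.symm]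
  split_ifs <;> subst_vars <;> (try contradiction) <;> module

theorem lie_H_H (w v c d : J) : ⁅H F w v, H F c d⁆ = 0 := by
  classical
  apply Subtype.ext
  rw [coe_lie, coe_H, coe_H, ZeroMemClass.coe_zero]
  simp only [Module.End.mul_eq_comp, LinearMap.sub_comp, LinearMap.comp_sub]
  simp only [← Module.End.mul_eq_comp, elemEnd_mul]
  split_ifs <;> subst_vars <;> (try contradiction) <;> module

def generators (F : Type*) [Field F] (J : Type*) : Set (slJ F J) :=
  {x | (∃ i j h, x = E F i j h) ∨ ∃ i j, x = H F i j}

theorem elemEnd_sub_trF_smul_mem_span_generators (o i j : J) :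
    elemEnd F i j - trF F (elemEnd F i j) • elemEnd F o o ∈
      Submodule.span F ((slJ F J).toSubmodule.subtype '' generators F J) := by
  classical
  refine Submodule.subset_span ?_
  rw [trF_elemEnd]
  split_ifs with h
  · exact ⟨H F i o, Or.inr ⟨_, _, rfl⟩, by rw [one_smul, h]; rfl⟩
  · exact ⟨E F i j h, Or.inl ⟨_, _, h, rfl⟩, by
      rw [zero_smul, sub_zero (G := Module.End F (J →₀ F))]; rfl⟩

theorem sub_trF_smul_mem_span_generators (o : J) {f : Module.End F (J →₀ F)}
    (hf : Finitary F f) :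
    f - trF F f • elemEnd F o o ∈
      Submodule.span F ((slJ F J).toSubmodule.subtype '' generators F J) := by
  suffices Finitary F f ∧ f - trF F f • elemEnd F o o ∈
      Submodule.span F ((slJ F J).toSubmodule.subtype '' generators F J) from this.2
  rw [hf.eq_sum_elemEnd]
  refine Finset.sum_induction _ (fun g => Finitary F g ∧ g - trF F g • elemEnd F o o ∈ _)
    (fun g h hg hh => ⟨hg.1.add hh.1, ?_⟩) ⟨Finitary.zero, ?_⟩
    fun p _ => ⟨(finitary_elemEnd _ _).smul _, ?_⟩
  · rw [trF_add hg.1 hh.1, add_smul]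
    convert Submodule.add_mem _ hg.2 hh.2 using 1
    abel
  · rw [trF_zero, zero_smul, sub_zero (G := Module.End F (J →₀ F))]
    exact Submodule.zero_mem _
  · rw [trF_smul]
    convert Submodule.smul_mem _ (f (Finsupp.single p.2 1) p.1)
      (elemEnd_sub_trF_smul_mem_span_generators o p.1 p.2) using 1
    module

theorem span_generators [Nonempty J] : Submodule.span F (generators F J) = ⊤ := by
  obtain ⟨o⟩ := ‹Nonempty J›
  refine eq_top_iff.mpr fun x _ => ?_
  rw [← Submodule.apply_mem_span_image_iff_mem_span (f := (slJ F J).toSubmodule.subtype)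
    Subtype.val_injective]
  have hx := sub_trF_smul_mem_span_generators o x.2.1
  rwa [x.2.2, zero_smul, sub_zero (G := Module.End F (J →₀ F))] at hx

variable (D : LieDerivation F (slJ F J) (slJ F J))

noncomputable def derivPairing (i j : J) (h : i ≠ j) : F :=
  traceForm F J (D (E F i j h)) (E F j i h.symm)

theorem derivPairing_eq_add {i j k : J} (hij : i ≠ j) (hik : i ≠ k) (hkj : k ≠ j) :
    derivPairing D i j hij = derivPairing D i k hik + derivPairing D k j hkj := by
  have hinv := traceForm_lieInvariant (F := F) (J := J)
  rw [derivPairing, ← lie_E_E hik hkj hij, D.apply_lie_eq_add, map_add, LinearMap.add_apply,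
    hinv.apply_lie_apply (D _), lie_E_E hkj hij.symm hik.symm, hinv (E F i k hik), ← lie_skew,
    lie_E_E hij.symm hik hkj.symm, map_neg, neg_neg, add_comm]
  rfl

theorem derivForm_traceForm_E_E_swap [Infinite J] {a b : J} (hab : a ≠ b) :
    (traceForm F J).derivForm D (E F a b hab) (E F b a hab.symm) = 0 := by
  classical
  obtain ⟨i, hi⟩ := Infinite.exists_notMem_finset ({a, b} : Finset J)
  simp only [Finset.mem_insert, Finset.mem_singleton, not_or] at hi
  rw [LinearMap.BilinForm.derivForm_apply, traceForm_comm (E F a b hab)]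
  change derivPairing D a b hab + derivPairing D b a hab.symm = 0
  linear_combination -derivPairing_eq_add D hi.2 hi.1 hab - derivPairing_eq_add D hi.1 hi.2 hab.symm

theorem lieInvariant_derivForm_traceForm :
    ((traceForm F J).derivForm D).lieInvariant (slJ F J) :=
  (traceForm_lieInvariant (F := F) (J := J)).derivForm D

theorem derivForm_traceForm_E_E [CharZero F] [Infinite J] {a b c d : J} (hab : a ≠ b)
    (hcd : c ≠ d) : (traceForm F J).derivForm D (E F a b hab) (E F c d hcd) = 0 := by
  classical
  by_cases hswap : c = b ∧ d = a
  · obtain ⟨rfl, rfl⟩ := hswap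
    exact derivForm_traceForm_E_E_swap D hab
  have hinv := lieInvariant_derivForm_traceForm D
  obtain ⟨v, hv⟩ := Infinite.exists_notMem_finset ({a, b, c, d} : Finset J)
  simp only [Finset.mem_insert, Finset.mem_singleton, not_or] at hv
  obtain ⟨hva, hvb, hvc, hvd⟩ := hv
  -- `ad (H w v)` has weights `δ_wa - δ_wb` and `δ_wc - δ_wd`; take `w = c` if `d = a`, else `a`.
  by_cases hda : d = a
  · subst hda
    have hcb : c ≠ b := fun h => hswap ⟨h, rfl⟩
    refine hinv.apply_eq_zero_of_lie_eq_smul (lie_H_E_of_ne c hab hva hvb)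
      (lie_H_E_of_ne c hcd hvc hvd) ?_
    simp [hcd, hcb]
  · refine hinv.apply_eq_zero_of_lie_eq_smul (lie_H_E_of_ne a hab hva hvb)
      (lie_H_E_of_ne a hcd hvc hvd) ?_
    simp only [if_neg hab, if_neg (Ne.symm hda)]
    split_ifs <;> norm_num

theorem derivForm_traceForm_E_H [Infinite J] {a b : J} (hab : a ≠ b) (c d : J) :
    (traceForm F J).derivForm D (E F a b hab) (H F c d) = 0 := by
  classical
  obtain ⟨v, hv⟩ := Infinite.exists_notMem_finset ({a, b} : Finset J)
  simp only [Finset.mem_insert, Finset.mem_singleton, not_or] at hv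
  refine (lieInvariant_derivForm_traceForm D).apply_eq_zero_of_lie_eq_smul
    (lie_H_E_of_ne a hab hv.1 hv.2) (m := 0) (by rw [zero_smul]; exact lie_H_H a v c d) ?_
  simp [hab]

theorem derivForm_traceForm_E [CharZero F] [Infinite J] {a b : J} (hab : a ≠ b) :
    (traceForm F J).derivForm D (E F a b hab) = 0 := by
  refine LinearMap.ext_on span_generators ?_
  rintro y (⟨c, d, hcd, rfl⟩ | ⟨c, d, rfl⟩)
  · exact derivForm_traceForm_E_E D hab hcd
  · exact derivForm_traceForm_E_H D hab c d

theorem derivForm_traceForm_H [CharZero F] [Infinite J] (a b : J) :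
    (traceForm F J).derivForm D (H F a b) = 0 := by
  by_cases hab : a = b
  · rw [hab, H_self, map_zero]
  ext y
  rw [← lie_E_E_swap hab, (lieInvariant_derivForm_traceForm D).apply_lie_apply,
    derivForm_traceForm_E D hab, LinearMap.zero_apply, LinearMap.zero_apply]

theorem derivForm_traceForm [CharZero F] [Infinite J] : (traceForm F J).derivForm D = 0 := by
  refine LinearMap.ext_on span_generators ?_
  rintro x (⟨a, b, hab, rfl⟩ | ⟨a, b, rfl⟩)
  · exact derivForm_traceForm_E D hab
  · exact derivForm_traceForm_H D a b

end slJ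

/-- The trace form `κ (f, g) = tr (f ∘ g)` on `sl_J(F)` (with `F` of characteristic
zero and `J` infinite) is invariant under every derivation `D` of `sl_J(F)`:
`κ (D f, g) + κ (f, D g) = 0`. -/
theorem traceForm_slJ_invariant_under_derivations (F : Type*) [Field F] [CharZero F]
    (J : Type*) [Infinite J]
    (D : LieDerivation F (slJ F J) (slJ F J)) (f g : slJ F J) :
    kappa F J (D f) g + kappa F J f (D g) = 0 :=
  LinearMap.congr_fun₂ (slJ.derivForm_traceForm D) f g
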